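/- arXiv:1708.04504 — 4 statements merged into one kernel-verified Lean document; each statement's English description precedes it below -/
import Mathlib

section
/- Let G be an oriented graph and let P be an oriented path of length n ≥ 1, with l = l(P) the length of the longest directed subpath of P. If G contains a k-mindegree pair for some real k, then either P is a subgraph of G, or G contains an independent set of size at least (k - n)/l. -/
/-- The oriented path of length `n` (on `n+1` vertices) whose `i`-th edge is directed
forwards iff `ε i = true`. -/
def PathRel (n : ℕ) (ε : ℕ → Bool) (x y : Fin (n + 1)) : Prop :=
  ∃ i : ℕ, i < n ∧
    ((ε i = true ∧ (x : ℕ) = i ∧ (y : ℕ) = i + 1) ∨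
     (ε i = false ∧ (x : ℕ) = i + 1 ∧ (y : ℕ) = i))

/-- The length of the longest directed subpath of the oriented path of length `n`
encoded by `ε`, i.e. the longest constant run of `ε` inside `[0, n)`. -/
noncomputable def maxRun (n : ℕ) (ε : ℕ → Bool) : ℕ :=
  sSup {d | ∃ a, a + d ≤ n ∧ ∀ i, a ≤ i → i < a + d → ε i = ε a}

/-!
Suppose every independent set has fewer than `s = (k - n) / l` vertices. By the Gallai–Roy
theorem, any `(m + 1) s` vertices then span a directed path with `m` edges. Cut `P` into its
maximal directed runs, each of length at most `l`, and embed them one after another. A forward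
run starting at `v ∈ X` is placed in the out-neighbourhood of `v` inside `Y`, which keeps at
least `k - n ≥ l s` vertices after discarding those already used; it ends in `Y`, where the next
run, a backward one, starts, and backward runs are forward runs of the converse graph with the
roles of `X` and `Y` exchanged.
-/

open Relation

namespace OrientedPath

theorem lt_of_transGen {α : Type*} {r : α → α → Prop} {φ : α → ℕ}
    (hφ : ∀ a b, r a b → φ b < φ a) {a b : α} (hab : TransGen r a b) : φ b < φ a := by
  induction hab with
  | single h => exact hφ _ _ h
  | tail _ h ih => exact (hφ _ _ h).trans ih

theorem reaches_of_step {P : ℕ → Prop} {n : ℕ} (h0 : P 0)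
    (hstep : ∀ j < n, P j → ∃ j', j < j' ∧ j' ≤ n ∧ P j') : P n := by
  suffices ∀ d j, n - j = d → j ≤ n → P j → P n from this _ 0 rfl n.zero_le h0
  intro d
  induction d using Nat.strong_induction_on with
  | _ d ih =>
    intro j hd hjn hj
    rcases hjn.lt_or_eq with hlt | rfl
    · obtain ⟨j', hjj', hj'n, hj'⟩ := hstep j hlt hj
      exact ih (n - j') (by omega) j' rfl hj'n hj'
    · exact hj

section Height

variable {α : Type*} (r : α → α → Prop)

/-- The length of the longest `r`-walk from `a`; junk value `0` if such walks are unbounded. -/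
noncomputable def walkHeight (a : α) : ℕ :=
  sSup {d | ∃ p : ℕ → α, p 0 = a ∧ ∀ i < d, r (p i) (p (i + 1))}

variable {r} {φ : α → ℕ}

theorem add_le_of_walk (hφ : ∀ a b, r a b → φ b < φ a) (p : ℕ → α) (d : ℕ)
    (hp : ∀ i < d, r (p i) (p (i + 1))) :
    φ (p d) + d ≤ φ (p 0) := by
  induction d with
  | zero => simp
  | succ d ih =>
    have := hφ _ _ (hp d d.lt_succ_self)
    have := ih fun i hi => hp i (hi.trans d.lt_succ_self)
    omega

theorem bddAbove_walkLengths (hφ : ∀ a b, r a b → φ b < φ a) (a : α) :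
    BddAbove {d | ∃ p : ℕ → α, p 0 = a ∧ ∀ i < d, r (p i) (p (i + 1))} := by
  refine ⟨φ a, fun d ⟨p, hp0, hp⟩ => ?_⟩
  have := add_le_of_walk hφ p d hp
  rw [hp0] at this
  omega

theorem exists_walk_walkHeight (hφ : ∀ a b, r a b → φ b < φ a) (a : α) :
    ∃ p : ℕ → α, p 0 = a ∧ ∀ i < walkHeight r a, r (p i) (p (i + 1)) :=
  Nat.sSup_mem (s := {d | ∃ p : ℕ → α, p 0 = a ∧ ∀ i < d, r (p i) (p (i + 1))})
    ⟨0, fun _ => a, rfl, fun _ h => absurd h (Nat.not_lt_zero _)⟩ (bddAbove_walkLengths hφ a)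

theorem walkHeight_lt (hφ : ∀ a b, r a b → φ b < φ a) {a b : α} (hab : r a b) :
    walkHeight r b < walkHeight r a := by
  obtain ⟨p, hp0, hp⟩ := exists_walk_walkHeight hφ b
  refine Nat.lt_of_succ_le (le_csSup (bddAbove_walkLengths hφ a)
    ⟨fun i => if i = 0 then a else p (i - 1), rfl, fun i hi => ?_⟩)
  rcases i with _ | i
  · simpa [hp0] using hab
  · simpa using hp i (by omega)

end Height

section Acyclic

variable {α : Type*}

def EdgeAcyclic (F : Finset (α × α)) : Prop :=
  ∃ φ : α → ℕ, ∀ e ∈ F, φ e.2 < φ e.1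

theorem EdgeAcyclic.walkHeight_lt {F : Finset (α × α)} (hF : EdgeAcyclic F) {a b : α}
    (hab : (a, b) ∈ F) :
    walkHeight (fun x y => (x, y) ∈ F) b < walkHeight (fun x y => (x, y) ∈ F) a := by
  obtain ⟨φ, hφ⟩ := hF
  exact OrientedPath.walkHeight_lt (fun x y h => hφ (x, y) h) hab

theorem EdgeAcyclic.insert [DecidableEq α] {F : Finset (α × α)} (hF : EdgeAcyclic F) {u v : α}
    (hvu : ¬ ReflTransGen (fun x y => (x, y) ∈ F) v u) : EdgeAcyclic (insert (u, v) F) := by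
  classical
  set h := walkHeight (fun x y => (x, y) ∈ F)
  -- vertices reachable from `v` keep their height, all others are lifted above `h v`
  refine ⟨fun w => h w + if ReflTransGen (fun x y => (x, y) ∈ F) v w then 0 else h v + 1, ?_⟩
  intro e he
  rcases Finset.mem_insert.mp he with rfl | he
  · simp only [hvu, ReflTransGen.refl, if_true, if_false]
    omega
  · have hlt : h e.2 < h e.1 := hF.walkHeight_lt he
    by_cases ha : ReflTransGen (fun x y => (x, y) ∈ F) v e.1
    · simpa [ha, ha.tail he] using hlt
    · simp only [ha, if_false]
      split_ifs <;> omega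

end Acyclic

section GallaiRoy

variable {V : Type*}

def IsIndep (G : V → V → Prop) (S : Set V) : Prop :=
  ∀ x ∈ S, ∀ y ∈ S, ¬ G x y

/-- Gallai–Roy: the heights in a maximal acyclic set of edges properly colour `W`, and the
highest vertex starts a path using every colour. -/
theorem exists_path_and_coloring {G : V → V → Prop} (hG : ∀ x, ¬ G x x) {W : Finset V}
    (hW : W.Nonempty) :
    ∃ (R : ℕ) (p : ℕ → V) (c : V → ℕ),
      (∀ i ≤ R, p i ∈ W) ∧ Set.InjOn p (Set.Iic R) ∧ (∀ i < R, G (p i) (p (i + 1))) ∧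
      (∀ w ∈ W, c w ≤ R) ∧ ∀ x ∈ W, ∀ y ∈ W, G x y → c x ≠ c y := by
  classical
  set E := (W ×ˢ W).filter fun e => G e.1 e.2
  obtain ⟨F, hFmem, hFmax⟩ := (E.powerset.filter EdgeAcyclic).exists_max_image Finset.card
    ⟨∅, by simp [EdgeAcyclic]⟩
  rw [Finset.mem_filter, Finset.mem_powerset] at hFmem
  obtain ⟨hFE, hF⟩ := hFmem
  set h := walkHeight fun x y => (x, y) ∈ F
  have hlt : ∀ a b, (a, b) ∈ F → h b < h a := fun a b => hF.walkHeight_lt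
  have hcycle : ∀ x y, (x, y) ∈ E → (x, y) ∉ F →
      ReflTransGen (fun a b => (a, b) ∈ F) y x := by
    intro x y hxy hxyF
    by_contra hyx
    have := hFmax _ (Finset.mem_filter.mpr
      ⟨Finset.mem_powerset.mpr (Finset.insert_subset hxy hFE), hF.insert hyx⟩)
    rw [Finset.card_insert_of_notMem hxyF] at this
    omega
  have hproper : ∀ x ∈ W, ∀ y ∈ W, G x y → h x ≠ h y := by
    intro x hx y hy hxy
    by_cases hxyF : (x, y) ∈ F
    · exact (hlt x y hxyF).ne'
    · have hE : (x, y) ∈ E := by simp [E, hx, hy, hxy]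
      rcases reflTransGen_iff_eq_or_transGen.mp (hcycle x y hE hxyF) with rfl | hyx
      · exact absurd hxy (hG x)
      · exact (lt_of_transGen hlt hyx).ne
  obtain ⟨v, hv, hvmax⟩ := W.exists_max_image h hW
  obtain ⟨φ, hφ⟩ := hF
  obtain ⟨p, hp0, hp⟩ := exists_walk_walkHeight (fun a b hab => hφ (a, b) hab) v
  have hpE : ∀ i < h v, (p i, p (i + 1)) ∈ E := fun i hi => hFE (hp i hi)
  have hpW : ∀ i ≤ h v, p i ∈ W := by
    rintro (_ | i) hi
    · exact hp0 ▸ hv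
    · exact (Finset.mem_product.mp (Finset.mem_filter.mp (hpE i (by omega))).1).2
  have hpinj : Set.InjOn p (Set.Iic (h v)) :=
    (strictAntiOn_Iic_of_succ_lt (ψ := h ∘ p) fun i hi => hlt _ _ (hp i hi)).injOn.of_comp
  exact ⟨h v, p, h, hpW, hpinj, fun i hi => (Finset.mem_filter.mp (hpE i hi)).2, hvmax, hproper⟩

theorem exists_path_of_card_le {G : V → V → Prop} (hG : ∀ x, ¬ G x x) {s : ℝ}
    (hind : ∀ S : Set V, IsIndep G S → (S.ncard : ℝ) < s) {W : Finset V} {m : ℕ}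
    (hW : ((m : ℝ) + 1) * s ≤ W.card) :
    ∃ p : ℕ → V, (∀ i ≤ m, p i ∈ W) ∧ Set.InjOn p (Set.Iic m) ∧
      ∀ i < m, G (p i) (p (i + 1)) := by
  classical
  have hs : 0 < s := by simpa using hind ∅ (by simp [IsIndep])
  have hWne : W.Nonempty := by
    rw [← Finset.card_pos]
    exact_mod_cast (by positivity : (0 : ℝ) < (m + 1) * s).trans_le hW
  obtain ⟨R, p, c, hpW, hpinj, hp, hcR, hc⟩ := exists_path_and_coloring hG hWne
  have hfibre : ∀ j, ((W.filter (c · = j)).card : ℝ) < s := fun j => by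
    rw [← Set.ncard_coe_finset]
    refine hind _ fun x hx y hy hxy => ?_
    rw [Finset.mem_coe, Finset.mem_filter] at hx hy
    exact hc x hx.1 y hy.1 hxy (hx.2.trans hy.2.symm)
  have hcard : (W.card : ℝ) < (R + 1) * s := calc
    (W.card : ℝ) = ∑ j ∈ Finset.range (R + 1), ((W.filter (c · = j)).card : ℝ) := by
        rw [Finset.card_eq_sum_card_fiberwise (f := c) (t := Finset.range (R + 1))
          fun w hw => by simpa [Nat.lt_succ_iff] using hcR w hw]
        push_cast
        rfl
    _ < ∑ _j ∈ Finset.range (R + 1), s :=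
        Finset.sum_lt_sum_of_nonempty (by simp) fun j _ => hfibre j
    _ = (R + 1) * s := by simp
  have hmR : (m : ℝ) + 1 < R + 1 := lt_of_mul_lt_mul_right (hW.trans_lt hcard) hs.le
  have hmR : m ≤ R := by exact_mod_cast (by linarith : (m : ℝ) ≤ R)
  exact ⟨p, fun i hi => hpW i (hi.trans hmR), hpinj.mono (Set.Iic_subset_Iic.mpr hmR),
    fun i hi => hp i (by omega)⟩

end GallaiRoy

section Runs

variable {V : Type*} [Fintype V] {G : V → V → Prop}

theorem exists_run (hG : ∀ x, ¬ G x x) {s : ℝ}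
    (hind : ∀ S : Set V, IsIndep G S → (S.ncard : ℝ) < s) {Y : Set V} {k : ℝ} {v : V}
    (hv : k ≤ ({y | y ∈ Y ∧ G v y}.ncard : ℝ)) (U : Finset V) (m : ℕ)
    (hk : ((m : ℝ) + 1) * s + U.card ≤ k) :
    ∃ p : ℕ → V, p 0 = v ∧ (∀ i, 1 ≤ i → i ≤ m + 1 → p i ∈ Y ∧ p i ∉ U) ∧
      Set.InjOn p (Set.Iic (m + 1)) ∧ ∀ i ≤ m, G (p i) (p (i + 1)) := by
  classical
  set N := Finset.univ.filter fun y => y ∈ Y ∧ G v y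
  have hN : k ≤ N.card := by
    rwa [← Set.ncard_coe_finset, Finset.coe_filter_univ]
  have hW : ((m : ℝ) + 1) * s ≤ (N \ U).card := by
    have : (N.card : ℝ) ≤ (N \ U).card + U.card := by
      exact_mod_cast Finset.card_le_card_sdiff_add_card
    linarith
  obtain ⟨q, hqW, hqinj, hq⟩ := exists_path_of_card_le hG hind hW
  have hqN : ∀ i ≤ m, (q i ∈ Y ∧ G v (q i)) ∧ q i ∉ U := fun i hi => by
    simpa [N] using hqW i hi
  have hvq : ∀ i ≤ m, v ≠ q i := fun i hi h => hG v (h ▸ (hqN i hi).1.2)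
  refine ⟨fun i => if i = 0 then v else q (i - 1), rfl, ?_, ?_, ?_⟩
  · rintro (_ | i) h1 h2
    · omega
    · simpa using ⟨(hqN i (by omega)).1.1, (hqN i (by omega)).2⟩
  · rintro (_ | a) ha (_ | b) hb hab <;> simp only [Set.mem_Iic] at ha hb <;>
      simp only [if_true, Nat.add_one_ne_zero, if_false, Nat.add_sub_cancel] at hab
    · rfl
    · exact absurd hab (hvq b (by omega))
    · exact absurd hab.symm (hvq a (by omega))
    · rw [hqinj (Set.mem_Iic.mpr (by omega : a ≤ m)) (Set.mem_Iic.mpr (by omega : b ≤ m))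
        hab]
  · rintro (_ | i) hi
    · simpa using (hqN 0 (Nat.zero_le m)).1.2
    · simpa using hq i (by omega)

def orient (b : Bool) (G : V → V → Prop) : V → V → Prop :=
  cond b G (flip G)

/-- A backward run is a forward run of the converse graph, with `X` and `Y` exchanged. -/
theorem exists_orient_run (hG : ∀ x, ¬ G x x) {s k : ℝ}
    (hind : ∀ S : Set V, IsIndep G S → (S.ncard : ℝ) < s) {X Y : Set V}
    (hout : ∀ x ∈ X, k ≤ ({y | y ∈ Y ∧ G x y}.ncard : ℝ))
    (hin : ∀ y ∈ Y, k ≤ ({x | x ∈ X ∧ G x y}.ncard : ℝ)) (b : Bool) {v : V}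
    (hv : v ∈ cond b X Y) (U : Finset V) (m : ℕ)
    (hk : ((m : ℝ) + 1) * s + U.card ≤ k) :
    ∃ p : ℕ → V, p 0 = v ∧
      (∀ i, 1 ≤ i → i ≤ m + 1 → p i ∈ cond b Y X ∧ p i ∉ U) ∧
      Set.InjOn p (Set.Iic (m + 1)) ∧ ∀ i ≤ m, orient b G (p i) (p (i + 1)) := by
  cases b
  · exact exists_run (G := flip G) hG (fun S hS => hind S fun x hx y hy => hS y hy x hx)
      (hin v hv) U m hk
  · exact exists_run hG hind (hout v hv) U m hk

end Runs

section Encoding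

theorem le_maxRun {n a d : ℕ} {ε : ℕ → Bool} (had : a + d ≤ n)
    (hrun : ∀ i, a ≤ i → i < a + d → ε i = ε a) : d ≤ maxRun n ε :=
  le_csSup ⟨n, fun _ ⟨_, h, _⟩ => by omega⟩ ⟨a, had, hrun⟩

theorem exists_run_end (ε : ℕ → Bool) {j n : ℕ} (hj : j < n) :
    ∃ m, j + (m + 1) ≤ n ∧ (∀ i, j ≤ i → i < j + (m + 1) → ε i = ε j) ∧
      (j + (m + 1) < n → ε (j + (m + 1)) ≠ ε j) := by
  classical
  have hex : ∃ m, j + (m + 1) = n ∨ ε (j + (m + 1)) ≠ ε j :=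
    ⟨n - j - 1, Or.inl (by omega)⟩
  refine ⟨Nat.find hex, ?_, fun i h1 h2 => ?_,
    fun h => (Nat.find_spec hex).resolve_left h.ne⟩
  · have := Nat.find_le (h := hex) (n := n - j - 1) (Or.inl (by omega))
    omega
  · obtain rfl | h1 := h1.eq_or_lt
    · rfl
    · have := Nat.find_min hex (m := i - j - 1) (by omega)
      rw [not_or, not_not, show j + (i - j - 1 + 1) = i by omega] at this
      exact this.2

variable {V : Type*} {G : V → V → Prop} {ε : ℕ → Bool}

def EmbedsPrefix (G : V → V → Prop) (ε : ℕ → Bool) (j : ℕ) (g : ℕ → V) : Prop :=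
  Set.InjOn g (Set.Iic j) ∧ ∀ i < j, orient (ε i) G (g i) (g (i + 1))

theorem embedsPrefix_zero (v : V) : EmbedsPrefix G ε 0 fun _ => v :=
  ⟨fun _ ha _ hb _ => (Nat.le_zero.mp ha).trans (Nat.le_zero.mp hb).symm,
    fun i hi => absurd hi i.not_lt_zero⟩

theorem EmbedsPrefix.append {g p : ℕ → V} {j r : ℕ} (hg : EmbedsPrefix G ε j g)
    (hp0 : p 0 = g j) (hpinj : Set.InjOn p (Set.Iic r))
    (hpg : ∀ i, 1 ≤ i → i ≤ r → ∀ i' ≤ j, p i ≠ g i')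
    (hp : ∀ i < r, orient (ε (j + i)) G (p i) (p (i + 1))) :
    EmbedsPrefix G ε (j + r) fun i => if i ≤ j then g i else p (i - j) := by
  have hright : ∀ i, j ≤ i → (if i ≤ j then g i else p (i - j)) = p (i - j) := by
    intro i hi
    split_ifs with h
    · obtain rfl : i = j := le_antisymm h hi
      simp [hp0]
    · rfl
  refine ⟨fun a ha b hb hab => ?_, fun i hi => ?_⟩
  · simp only [Set.mem_Iic] at ha hb
    by_cases haj : a ≤ j <;> by_cases hbj : b ≤ j <;>
      simp only [haj, hbj, if_true, if_false] at hab
    · exact hg.1 haj hbj hab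
    · exact absurd hab.symm (hpg (b - j) (by omega) (by omega) a haj)
    · exact absurd hab (hpg (a - j) (by omega) (by omega) b hbj)
    · have := hpinj (Set.mem_Iic.mpr (by omega : a - j ≤ r))
        (Set.mem_Iic.mpr (by omega : b - j ≤ r)) hab
      omega
  · by_cases hij : i < j
    · simpa [hij.le, Nat.succ_le_of_lt hij] using hg.2 i hij
    · dsimp only
      rw [hright i (by omega), hright (i + 1) (by omega), show i + 1 - j = i - j + 1 by omega]
      simpa [show j + (i - j) = i by omega] using hp (i - j) (by omega)

theorem EmbedsPrefix.exists_pathRel {n : ℕ} {g : ℕ → V} (hg : EmbedsPrefix G ε n g) :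
    ∃ f : Fin (n + 1) → V, Function.Injective f ∧
      ∀ x y, PathRel n ε x y → G (f x) (f y) := by
  refine ⟨fun x => g x, fun a b hab =>
    Fin.ext (hg.1 (Nat.lt_succ_iff.mp a.2) (Nat.lt_succ_iff.mp b.2) hab), ?_⟩
  rintro x y ⟨i, hi, ⟨he, hx, hy⟩ | ⟨he, hx, hy⟩⟩
  · simpa [orient, he, hx, hy] using hg.2 i hi
  · simpa [orient, flip, he, hx, hy] using hg.2 i hi

end Encoding

section Step

variable {V : Type*} [Fintype V] {G : V → V → Prop}

theorem exists_embedsPrefix_step (hG : ∀ x, ¬ G x x) {s k : ℝ}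
    (hind : ∀ S : Set V, IsIndep G S → (S.ncard : ℝ) < s) {X Y : Set V}
    (hout : ∀ x ∈ X, k ≤ ({y | y ∈ Y ∧ G x y}.ncard : ℝ))
    (hin : ∀ y ∈ Y, k ≤ ({x | x ∈ X ∧ G x y}.ncard : ℝ)) {n : ℕ} {ε : ℕ → Bool}
    (hls : (maxRun n ε : ℝ) * s ≤ k - n) {j : ℕ} (hj : j < n) {g : ℕ → V}
    (hg : EmbedsPrefix G ε j g) (hgj : g j ∈ cond (ε j) X Y) :
    ∃ j', j < j' ∧ j' ≤ n ∧
      ∃ g', EmbedsPrefix G ε j' g' ∧ (j' < n → g' j' ∈ cond (ε j') X Y) := by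
  classical
  have hs : 0 < s := by simpa using hind ∅ (by simp [IsIndep])
  obtain ⟨m, hjm, hrun, hnext⟩ := exists_run_end ε hj
  set U := (Finset.range (j + 1)).image g
  have hk : ((m : ℝ) + 1) * s + U.card ≤ k := by
    have hU : (U.card : ℝ) ≤ j + 1 := by
      exact_mod_cast Finset.card_image_le.trans (Finset.card_range _).le
    have hml : ((m : ℝ) + 1) ≤ maxRun n ε := by exact_mod_cast le_maxRun hjm hrun
    have hjn : (j : ℝ) + 1 ≤ n := by exact_mod_cast hj
    nlinarith
  obtain ⟨p, hp0, hpU, hpinj, hp⟩ := exists_orient_run hG hind hout hin (ε j) hgj U m hk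
  refine ⟨j + (m + 1), by omega, hjm, _, hg.append hp0 hpinj ?_ ?_, fun hlt => ?_⟩
  · intro i h1 h2 i' hi' h
    exact (hpU i h1 h2).2 (Finset.mem_image.mpr ⟨i', Finset.mem_range.mpr (by omega), h.symm⟩)
  · intro i hi
    rw [hrun (j + i) (by omega) (by omega)]
    exact hp i (by omega)
  · have hend := (hpU (m + 1) (by omega) le_rfl).1
    rw [Bool.eq_not.mpr (hnext hlt), Bool.cond_not]
    simpa only [show ¬ j + (m + 1) ≤ j by omega, if_false, Nat.add_sub_cancel_left] using hend

end Step

end OrientedPath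

open OrientedPath in
theorem path_or_independent_set_general {V : Type*} [Fintype V] (G : V → V → Prop)
    (hG : ∀ x y, G x y → ¬ G y x)
    (n : ℕ) (ε : ℕ → Bool) (k : ℝ)
    (X Y : Set V) (hX : X.Nonempty) (hY : Y.Nonempty)
    (hout : ∀ x ∈ X, k ≤ ({y | y ∈ Y ∧ G x y}.ncard : ℝ))
    (hin : ∀ y ∈ Y, k ≤ ({x | x ∈ X ∧ G x y}.ncard : ℝ)) :
    (∃ f : Fin (n + 1) → V, Function.Injective f ∧
        ∀ x y, PathRel n ε x y → G (f x) (f y)) ∨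
    (∃ S : Set V, (∀ x ∈ S, ∀ y ∈ S, ¬ G x y) ∧
        (k - n) / (maxRun n ε : ℝ) ≤ (S.ncard : ℝ)) := by
  refine or_iff_not_imp_right.mpr fun hsmall => ?_
  push Not at hsmall
  set s := (k - n) / (maxRun n ε : ℝ)
  have hs : 0 < s := by simpa using hsmall ∅ (by simp)
  -- `x / 0 = 0`, so `s > 0` rules out `l = 0`
  have hl : (maxRun n ε : ℝ) ≠ 0 := fun h => by simp [s, h] at hs
  have hls : (maxRun n ε : ℝ) * s ≤ k - n := (mul_div_cancel₀ _ hl).le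
  obtain ⟨v, hv⟩ : (cond (ε 0) X Y).Nonempty := by cases ε 0 <;> assumption
  obtain ⟨g, hg, -⟩ := reaches_of_step
    (P := fun j => ∃ g, EmbedsPrefix G ε j g ∧ (j < n → g j ∈ cond (ε j) X Y))
    ⟨_, embedsPrefix_zero v, fun _ => hv⟩ fun j hj ⟨g, hg, hgj⟩ =>
      exists_embedsPrefix_step (fun x hx => hG x x hx hx) hsmall hout hin hls hj hg (hgj hj)
  exact hg.exists_pathRel

/-- If an oriented graph `G` has a `k`-mindegree pair, then either an
oriented path `P` of length `n ≥ 1` is a subgraph of `G`, or `G` has an independent set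
of size at least `(k - n) / l(P)`. -/
theorem path_or_independent_set {V : Type*} [Fintype V] (G : V → V → Prop)
    (hG : ∀ x y, G x y → ¬ G y x)
    (n : ℕ) (hn : 0 < n) (ε : ℕ → Bool) (k : ℝ)
    (X Y : Set V) (hX : X.Nonempty) (hY : Y.Nonempty) (hXY : Disjoint X Y)
    (hout : ∀ x ∈ X, k ≤ ({y | y ∈ Y ∧ G x y}.ncard : ℝ))
    (hin : ∀ y ∈ Y, k ≤ ({x | x ∈ X ∧ G x y}.ncard : ℝ)) :
    (∃ f : Fin (n + 1) → V, Function.Injective f ∧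
        ∀ x y, PathRel n ε x y → G (f x) (f y)) ∨
    (∃ S : Set V, (∀ x ∈ S, ∀ y ∈ S, ¬ G x y) ∧
        (k - n) / (maxRun n ε : ℝ) ≤ (S.ncard : ℝ)) :=
  path_or_independent_set_general G hG n ε k X Y hX hY hout hin
end

section
/- Let ε > 0 and n ≥ 2. If a directed graph D on n vertices (with no loops, but in which both edges xy and yx may be present) has at least (1+ε)·binom(n,2) edges, then D contains a copy of every oriented tree of order at most ⌈εn/2⌉. In particular, given any 2-colouring (red/blue) of the complete directed graph on n vertices in which at least (1+ε)·binom(n,2) edges are blue, there is a blue copy of every oriented tree of order at most ⌈εn/2⌉. -/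
/-!
Arcs of `D` that are not bidirected contribute at most one per unordered pair, so at least
`ε · binom(n, 2)` pairs are joined in both directions. This undirected graph has more than
`(m - 2) · n` edges, so deleting vertices of degree at most `m - 2` one at a time cannot exhaust
it and leaves a nonempty subgraph of minimum degree at least `m - 1`. A tree on `m` vertices
embeds there greedily, leaf by leaf, and since all its edges are bidirected in `D`, so does
every orientation of the tree.
-/

/-- The underlying simple graph of a directed graph given as a relation. -/
def Underlying {V : Type*} (t : V → V → Prop) : SimpleGraph V where
  Adj x y := x ≠ y ∧ (t x y ∨ t y x)
  symm := ⟨fun _ _ h => ⟨Ne.symm h.1, Or.symm h.2⟩⟩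
  loopless := ⟨fun _ h => h.1 rfl⟩

/-- An oriented tree: no bidirected edges, and the underlying graph is a tree. -/
def IsOrientedTree {V : Type*} (t : V → V → Prop) : Prop :=
  (∀ x y, t x y → ¬ t y x) ∧ (Underlying t).IsTree

/-- A tournament: no loops, and between any two distinct vertices exactly one
directed edge. -/
def IsTournament {V : Type*} (T : V → V → Prop) : Prop :=
  (∀ x, ¬ T x x) ∧ ∀ x y : V, x ≠ y → (T x y ↔ ¬ T y x)

open Finset

namespace SimpleGraph

universe u

theorem card_filter_adj_eq_two_mul_card_edgeFinset {V : Type*} [Fintype V] (G : SimpleGraph V)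
    [DecidableRel G.Adj] : #{p : V × V | G.Adj p.1 p.2} = 2 * #G.edgeFinset := by
  rw [← dart_card_eq_twice_card_edges, ← Fintype.card_subtype]
  exact Fintype.card_congr
    ⟨fun p => ⟨p.1, p.2⟩, fun d => ⟨d.toProd, d.adj⟩, fun _ => rfl, fun _ => rfl⟩

theorem exists_adj_notMem_of_card_le_degree {V : Type*} {G : SimpleGraph V} {v : V}
    [Fintype (G.neighborSet v)] {s : Finset V} (hv : v ∈ s) (hs : #s ≤ G.degree v) :
    ∃ w, G.Adj v w ∧ w ∉ s := by
  classical
  by_contra! h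
  have hsub : G.neighborFinset v ⊆ s.erase v := fun w hw =>
    mem_erase.2 ⟨((G.mem_neighborFinset v w).1 hw).ne', h w ((G.mem_neighborFinset v w).1 hw)⟩
  have := card_le_card hsub
  rw [card_erase_of_mem hv, card_neighborFinset_eq_degree] at this
  have := card_pos.2 ⟨v, hv⟩
  omega

theorem isContained_of_subsingleton {α W : Type*} [Subsingleton α] [Nonempty W]
    (T : SimpleGraph α) (G : SimpleGraph W) : T ⊑ G :=
  ⟨⟨⟨fun _ => Classical.arbitrary W, fun h => absurd (Subsingleton.elim _ _) h.ne⟩,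
    fun _ _ _ => Subsingleton.elim _ _⟩⟩

theorem exists_isContained_lt_minDegree {V : Type u} [Fintype V] (G : SimpleGraph V)
    [DecidableRel G.Adj] {d : ℕ} (h : d * Fintype.card V < #G.edgeFinset) :
    ∃ (W : Type u) (_ : Fintype W) (G' : SimpleGraph W) (_ : DecidableRel G'.Adj),
      Nonempty W ∧ d < G'.minDegree ∧ G' ⊑ G := by
  classical
  induction hk : Fintype.card V using Nat.strong_induction_on generalizing V with
  | _ k ih =>
  by_cases hdeg : ∀ v, d < G.degree v
  · have hV : Nonempty V := by
      obtain ⟨e, -⟩ := card_pos.1 (pos_of_gt h)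
      exact ⟨e.out.1⟩
    exact ⟨V, _, G, _, hV, le_minDegree_of_forall_le_degree _ _ hdeg, .rfl⟩
  · push Not at hdeg
    obtain ⟨x, hx⟩ := hdeg
    have hcard : Fintype.card ({x}ᶜ : Set V) = k - 1 := by
      rw [Fintype.card_compl_set, hk, Set.card_singleton]
    have hedges : #(G.induce {x}ᶜ).edgeFinset = #G.edgeFinset - G.degree x := by
      rw [card_edgeFinset_induce_compl_singleton, card_edgeFinset_deleteIncidenceSet]
    have hk0 : 0 < k := hk ▸ Fintype.card_pos_iff.2 ⟨x⟩
    have h' : d * Fintype.card ({x}ᶜ : Set V) < #(G.induce {x}ᶜ).edgeFinset := by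
      have := Nat.le_mul_of_pos_right d hk0
      rw [hedges, hcard, Nat.mul_sub_one]
      rw [hk] at h
      omega
    obtain ⟨W, _, G', _, hW, hd, hG'⟩ := ih (k - 1) (by omega) (G.induce {x}ᶜ) h' hcard
    exact ⟨W, _, G', _, hW, hd, hG'.trans ⟨Copy.induce G _⟩⟩

theorem isContained_of_copy_induce_compl_singleton {α W : Type*} {T : SimpleGraph α}
    {G : SimpleGraph W} {v u : α} (hv : ∀ x, T.Adj v x ↔ x = u) (huv : u ≠ v)
    (f : Copy (T.induce {v}ᶜ) G) {w : W} (hw : G.Adj (f ⟨u, huv⟩) w)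
    (hwf : ∀ x, f x ≠ w) :
    T ⊑ G := by
  classical
  let g : α → W := fun x => if hx : x = v then w else f ⟨x, hx⟩
  have hg_adj_v : ∀ y, T.Adj v y → G.Adj (g v) (g y) := by
    intro y hy
    obtain rfl := (hv y).1 hy
    simpa [g, huv] using hw.symm
  have hg_adj : ∀ x y, T.Adj x y → G.Adj (g x) (g y) := by
    intro x y hxy
    by_cases hx : x = v
    · exact hx ▸ hg_adj_v y (hx ▸ hxy)
    by_cases hy : y = v
    · exact (hy ▸ hg_adj_v x (hy ▸ hxy.symm)).symm
    have hxy' : (T.induce {v}ᶜ).Adj ⟨x, hx⟩ ⟨y, hy⟩ := hxy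
    simpa [g, hx, hy] using f.toHom.map_adj hxy'
  have hg_inj : Function.Injective g := by
    intro x y hxy
    by_cases hx : x = v <;> by_cases hy : y = v <;>
      simp only [g, hx, hy, dite_true, dite_false] at hxy
    · exact hx.trans hy.symm
    · exact absurd hxy.symm (hwf _)
    · exact absurd hxy (hwf _)
    · exact congrArg Subtype.val (f.injective hxy)
  exact ⟨⟨⟨g, hg_adj _ _⟩, hg_inj⟩⟩

theorem IsTree.isContained_of_card_sub_one_le_minDegree {α : Type u} {W : Type*} [Fintype α]
    [Fintype W] [Nonempty W] {T : SimpleGraph α} {G : SimpleGraph W} [DecidableRel G.Adj]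
    (hT : T.IsTree) (hG : Fintype.card α - 1 ≤ G.minDegree) : T ⊑ G := by
  classical
  induction hk : Fintype.card α generalizing α with
  | zero =>
    have : IsEmpty α := Fintype.card_eq_zero_iff.1 hk
    exact isContained_of_subsingleton T G
  | succ k ih =>
  rcases subsingleton_or_nontrivial α with hα | hα
  · exact isContained_of_subsingleton T G
  obtain ⟨v, hv⟩ := hT.exists_vert_degree_one_of_nontrivial
  obtain ⟨u, hvu, hu⟩ := degree_eq_one_iff_existsUnique_adj.1 hv
  have huv : u ≠ v := hvu.ne'
  have hT' : (T.induce {v}ᶜ).IsTree :=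
    ⟨hT.connected.induce_compl_singleton_of_degree_eq_one hv, hT.isAcyclic.induce _⟩
  have hcard : Fintype.card ({v}ᶜ : Set α) = k := by
    rw [Fintype.card_compl_set, hk, Set.card_singleton, Nat.add_sub_cancel]
  obtain ⟨f⟩ := ih hT' (by omega) hcard
  obtain ⟨w, hw, hwf⟩ := exists_adj_notMem_of_card_le_degree (G := G) (v := f ⟨u, huv⟩)
    (s := univ.map f.toEmbedding) (mem_map_of_mem _ (mem_univ _))
    (by rw [card_map, card_univ, hcard]
        exact (by omega : k ≤ G.minDegree).trans (G.minDegree_le_degree _))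
  exact isContained_of_copy_induce_compl_singleton
    (fun x => ⟨fun h => hu x h, fun h => h ▸ hvu⟩) huv f hw
    (fun x hx => hwf (hx ▸ mem_map_of_mem f.toEmbedding (mem_univ x)))

end SimpleGraph

def bidirectedGraph {V : Type*} (D : V → V → Prop) : SimpleGraph V where
  Adj x y := x ≠ y ∧ D x y ∧ D y x
  symm := ⟨fun _ _ h => ⟨h.1.symm, h.2.2, h.2.1⟩⟩
  loopless := ⟨fun _ h => h.1 rfl⟩

instance {V : Type*} [DecidableEq V] (D : V → V → Prop) [DecidableRel D] :
    DecidableRel (bidirectedGraph D).Adj :=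
  fun x y => inferInstanceAs (Decidable (x ≠ y ∧ D x y ∧ D y x))

-- Inclusion–exclusion for the arc set and its reverse, whose union misses the diagonal.
theorem card_arcs_le_choose_two_add_card_edgeFinset {V : Type*} [Fintype V] [DecidableEq V]
    (D : V → V → Prop) [DecidableRel D] (hloop : ∀ x, ¬ D x x) :
    #{p : V × V | D p.1 p.2} ≤ (Fintype.card V).choose 2 + #(bidirectedGraph D).edgeFinset := by
  set A : Finset (V × V) := {p : V × V | D p.1 p.2}
  set A' : Finset (V × V) := {p : V × V | D p.2 p.1}
  have hswap : #A' = #A :=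
    card_nbij' Prod.swap Prod.swap (by intro p; simp [A, A']) (by intro p; simp [A, A'])
      (fun _ _ => rfl) (fun _ _ => rfl)
  have hunion : A ∪ A' ⊆ univ.offDiag := by
    rintro ⟨x, y⟩ hp
    simp only [A, A', mem_union, mem_filter, mem_univ, true_and] at hp
    simp only [mem_offDiag, mem_univ, true_and]
    rintro rfl
    exact hp.elim (hloop x) (hloop x)
  have hinter : A ∩ A' = ({p : V × V | (bidirectedGraph D).Adj p.1 p.2} : Finset (V × V)) := by
    ext p
    simp only [A, A', mem_inter, mem_filter, mem_univ, true_and]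
    exact ⟨fun h => ⟨fun hp => hloop _ (hp ▸ h.1), h⟩, fun h => h.2⟩
  have hoff : #(univ : Finset V).offDiag = 2 * (Fintype.card V).choose 2 := by
    rw [offDiag_card, card_univ, Nat.choose_two_right, ← Nat.mul_sub_one,
      Nat.mul_div_cancel' (Nat.even_mul_pred_self _).two_dvd]
  have hsum := card_union_add_card_inter A A'
  rw [hinter, SimpleGraph.card_filter_adj_eq_two_mul_card_edgeFinset] at hsum
  have := card_le_card hunion
  omega

theorem sub_two_mul_lt_of_le_ceil {n m e : ℕ} {ε : ℝ} (hn : 2 ≤ n) (hε : 0 < ε)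
    (hεe : ε * n.choose 2 ≤ e) (he : e ≤ n.choose 2) (hm : m ≤ ⌈ε * n / 2⌉₊) :
    (m - 2) * n < e := by
  have hn' : (2 : ℝ) ≤ n := by exact_mod_cast hn
  have he' : (e : ℝ) ≤ n * (n - 1) / 2 := by
    rw [← Nat.cast_choose_two]
    exact_mod_cast he
  rw [Nat.cast_choose_two] at hεe
  have hC : (0 : ℝ) < n * (n - 1) / 2 := by nlinarith
  have hε1 : ε ≤ 1 := by
    by_contra! h
    nlinarith [mul_lt_mul_of_pos_right h hC]
  have hm' : (m : ℝ) < ε * n / 2 + 1 :=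
    (Nat.cast_le.2 hm).trans_lt (Nat.ceil_lt_add_one (by positivity))
  rcases le_or_gt 2 m with h2 | h2
  · have : (((m - 2) * n : ℕ) : ℝ) < e := by
      push_cast [Nat.cast_sub h2]
      nlinarith
    exact_mod_cast this
  · rw [Nat.sub_eq_zero_of_le h2.le, zero_mul]
    exact_mod_cast (by nlinarith [mul_pos hε hC] : (0 : ℝ) < e)

/-- If a loopless directed graph `D` on `n ≥ 2` vertices (antiparallel
edges allowed) has at least `(1 + ε) · n(n-1)/2` edges, then it contains a copy of
every oriented tree of order at most `⌈ε n / 2⌉`. -/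
theorem dense_digraph_contains_trees (n : ℕ) (hn : 2 ≤ n) (ε : ℝ) (hε : 0 < ε)
    (D : Fin n → Fin n → Prop) (hloop : ∀ x, ¬ D x x)
    (hE : (1 + ε) * ((n : ℝ) * ((n : ℝ) - 1) / 2) ≤
      ({p : Fin n × Fin n | D p.1 p.2}.ncard : ℝ)) :
    ∀ (m : ℕ) (t : Fin m → Fin m → Prop), IsOrientedTree t → m ≤ ⌈ε * n / 2⌉₊ →
      ∃ f : Fin m → Fin n, Function.Injective f ∧ ∀ x y, t x y → D (f x) (f y) := by
  classical
  intro m t ht hm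
  have hcount : (#{p : Fin n × Fin n | D p.1 p.2} : ℝ) ≤
      n.choose 2 + #(bidirectedGraph D).edgeFinset := by
    exact_mod_cast (by simpa using card_arcs_le_choose_two_add_card_edgeFinset D hloop)
  rw [Set.ncard_eq_toFinset_card', Set.toFinset_ofPred, ← Nat.cast_choose_two] at hE
  have hsparse : (m - 2) * n < #(bidirectedGraph D).edgeFinset :=
    sub_two_mul_lt_of_le_ceil hn hε (by linarith)
      (by simpa using (bidirectedGraph D).card_edgeFinset_le_card_choose_two) hm
  obtain ⟨W, _, G', _, _, hdeg, hG'⟩ :=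
    (bidirectedGraph D).exists_isContained_lt_minDegree (d := m - 2) (by simpa using hsparse)
  have hT : (Underlying t).IsContained G' :=
    ht.2.isContained_of_card_sub_one_le_minDegree (by rw [Fintype.card_fin]; omega)
  obtain ⟨f⟩ := hT.trans hG'
  refine ⟨f, f.injective, fun x y hxy => (f.toHom.map_adj ⟨?_, Or.inl hxy⟩).2.1⟩
  rintro rfl
  exact ht.1 x x hxy hxy
end

section
/- Given a 2-colouring (red/blue) of a complete directed graph, if there are at least 2k + 2l vertices each having red out-degree at most k, then there is a blue copy of every oriented tree on at most l vertices. -/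
/-!
Call the blue in- and out-neighbourhoods of a vertex *large* if they have at least `l` vertices.
Starting from the set `S` of vertices of red out-degree at most `k`, repeatedly delete a vertex
whose blue in- or out-neighbourhood inside the current set is not large. A set of `l + d`
vertices loses at least `d` red arcs with such a vertex, so deleting down to `l` vertices would
remove at least `d(d+1)/2` red arcs, where `d = |S| - l ≥ 2k + l`; this exceeds the at most
`k|S|` red arcs inside `S`. Hence the process stops at a nonempty set `K` in which every vertex
has large blue in- and out-neighbourhoods. An oriented tree on `m ≤ l` vertices then embeds in
blue into `K` greedily: embed the tree minus a leaf, and send the leaf to a blue neighbour (in the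
right direction) of the image of its parent that is not yet used; there are at least `m - 1`
such neighbours, and at most `m - 2` of them are used.
-/

open Finset

lemma Finset.exists_mem_notMem_of_card_le {W : Type*} [DecidableEq W] {A N : Finset W} {a : W}
    (ha : a ∈ A) (haN : a ∉ N) (h : #A ≤ #N) : ∃ w ∈ N, w ∉ A := by
  obtain ⟨w, hwN, hwA⟩ := exists_mem_notMem_of_card_lt_card (s := A.erase a) (t := N)
    (by rw [card_erase_of_mem ha]; have := card_pos.2 ⟨a, ha⟩; omega)
  exact ⟨w, hwN, fun h => hwA (mem_erase.2 ⟨ne_of_mem_of_not_mem hwN haN, h⟩)⟩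

section Degrees

variable {W : Type*} [DecidableEq W] (R : W → W → Prop) [DecidableRel R]

def outNbhd (C : Finset W) (v : W) : Finset W := {w ∈ C.erase v | R v w}

def inNbhd (C : Finset W) (v : W) : Finset W := {w ∈ C.erase v | R w v}

def arcCount (C : Finset W) : ℕ := ∑ v ∈ C, #(outNbhd R C v)

def MinInOutDegreeGE (C : Finset W) (l : ℕ) : Prop :=
  ∀ u ∈ C, l ≤ #(outNbhd R C u) ∧ l ≤ #(inNbhd R C u)

variable {R} {C : Finset W} {u : W}

lemma card_outNbhd_add_card_outNbhd_not (hu : u ∈ C) :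
    #(outNbhd R C u) + #(outNbhd (fun x y => ¬ R x y) C u) + 1 = #C := by
  rw [outNbhd, outNbhd, card_filter_add_card_filter_not, card_erase_add_one hu]

lemma card_inNbhd_add_card_inNbhd_not (hu : u ∈ C) :
    #(inNbhd R C u) + #(inNbhd (fun x y => ¬ R x y) C u) + 1 = #C := by
  rw [inNbhd, inNbhd, card_filter_add_card_filter_not, card_erase_add_one hu]

lemma card_outNbhd_eq_of_ne {v : W} (hu : u ∈ C) (huv : u ≠ v) :
    #(outNbhd R C v) = #(outNbhd R (C.erase u) v) + if R v u then 1 else 0 := by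
  simp only [outNbhd, card_filter]
  rw [← add_sum_erase _ _ (mem_erase.2 ⟨huv, hu⟩), erase_right_comm, add_comm]

lemma arcCount_eq_of_mem (hu : u ∈ C) :
    arcCount R C = arcCount R (C.erase u) + #(outNbhd R C u) + #(inNbhd R C u) := by
  have hin : #(inNbhd R C u) = ∑ v ∈ C.erase u, if R v u then 1 else 0 := card_filter _ _
  rw [arcCount, ← add_sum_erase _ _ hu,
    sum_congr rfl fun v hv => card_outNbhd_eq_of_ne hu (ne_of_mem_erase hv).symm,
    sum_add_distrib, hin, arcCount]
  ring

theorem exists_minInOutDegreeGE_not_of_two_mul_arcCount_lt (l : ℕ) :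
    ∀ (d : ℕ) (C : Finset W), #C = l + d → 2 * arcCount R C < d * (d + 1) →
      ∃ K : Finset W, K.Nonempty ∧ MinInOutDegreeGE (fun x y => ¬ R x y) K l := by
  intro d
  induction d with
  | zero => simp
  | succ d ih =>
    intro C hC harcs
    by_cases hgood : MinInOutDegreeGE (fun x y => ¬ R x y) C l
    · exact ⟨C, card_pos.1 (by omega), hgood⟩
    obtain ⟨u, hu, hbad⟩ := not_forall₂.1 hgood
    have hout := card_outNbhd_add_card_outNbhd_not (R := R) hu
    have hin := card_inNbhd_add_card_inNbhd_not (R := R) hu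
    have hsplit := arcCount_eq_of_mem (R := R) hu
    refine ih (C.erase u) (by rw [card_erase_of_mem hu]; omega) ?_
    have hlost : d + 1 ≤ #(outNbhd R C u) + #(inNbhd R C u) := by
      by_cases h : l ≤ #(outNbhd (fun x y => ¬ R x y) C u) <;> grind
    nlinarith

theorem exists_minInOutDegreeGE_not_of_card_outNbhd_le {k l : ℕ} (hl : 0 < l) {S : Finset W}
    (hS : 2 * k + 2 * l ≤ #S) (hdeg : ∀ v ∈ S, #(outNbhd R S v) ≤ k) :
    ∃ K : Finset W, K.Nonempty ∧ MinInOutDegreeGE (fun x y => ¬ R x y) K l := by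
  have harcs : arcCount R S ≤ k * #S := by
    simpa [arcCount, mul_comm] using sum_le_card_nsmul S _ k hdeg
  obtain ⟨d, hd⟩ : ∃ d, #S = l + d := ⟨#S - l, by omega⟩
  refine exists_minInOutDegreeGE_not_of_two_mul_arcCount_lt l d S hd ?_
  nlinarith

end Degrees

section OrientedTree

variable {V W : Type*} {B : W → W → Prop}

lemma underlying_restrict_eq_induce (t : V → V → Prop) (s : Set V) :
    Underlying (fun a b : s => t a b) = (Underlying t).induce s := by
  ext a b
  simp [Underlying, Subtype.ext_iff]

lemma IsOrientedTree.restrict_compl_singleton {t : V → V → Prop} (ht : IsOrientedTree t) {v : V}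
    [Fintype ((Underlying t).neighborSet v)] (hv : (Underlying t).degree v = 1) :
    IsOrientedTree (fun a b : ({v}ᶜ : Set V) => t a b) := by
  refine ⟨fun a b => ht.1 a b, ?_⟩
  rw [underlying_restrict_eq_induce]
  exact ⟨ht.2.connected.induce_compl_singleton_of_degree_eq_one hv, ht.2.isAcyclic.induce _⟩

lemma exists_extension_at_leaf {t : V → V → Prop} (hanti : ∀ x y, t x y → ¬ t y x) {u v : V}
    (huv : u ≠ v) (hleaf : ∀ x, (Underlying t).Adj v x → x = u) {K : Finset W}
    {f : ({v}ᶜ : Set V) → W} (hf : Function.Injective f) (hfK : ∀ x, f x ∈ K)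
    (hft : ∀ x y : ({v}ᶜ : Set V), t x y → B (f x) (f y)) {w : W} (hwK : w ∈ K)
    (hw : w ∉ Set.range f) (hwout : t u v → B (f ⟨u, huv⟩) w)
    (hwin : t v u → B w (f ⟨u, huv⟩)) :
    ∃ g : V → W, Function.Injective g ∧ (∀ x, g x ∈ K) ∧ ∀ x y, t x y → B (g x) (g y) := by
  classical
  have hne : ∀ x y, t x y → x ≠ y := fun x y h hxy => hanti x y h (hxy ▸ h)
  refine ⟨fun x => if h : x = v then w else f ⟨x, h⟩, ?_, ?_, ?_⟩
  · intro x y hxy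
    by_cases hx : x = v <;> by_cases hy : y = v <;> simp only [hx, hy, dif_pos, dif_neg,
      not_false_eq_true] at hxy
    · rw [hx, hy]
    · exact absurd ⟨_, hxy.symm⟩ hw
    · exact absurd ⟨_, hxy⟩ hw
    · exact congrArg Subtype.val (hf hxy)
  · intro x
    by_cases hx : x = v <;> simp [hx, hwK, hfK]
  · intro x y hxy
    by_cases hx : x = v
    · subst hx
      obtain rfl : y = u := hleaf y ⟨hne _ _ hxy, Or.inl hxy⟩
      simpa [huv] using hwin hxy
    by_cases hy : y = v
    · subst hy
      obtain rfl : x = u := hleaf x ⟨(hne _ _ hxy).symm, Or.inr hxy⟩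
      simpa [huv] using hwout hxy
    simpa [hx, hy] using hft ⟨x, hx⟩ ⟨y, hy⟩ hxy

theorem IsOrientedTree.exists_embedding [DecidableEq W] [DecidableRel B] [Fintype V]
    {t : V → V → Prop} (ht : IsOrientedTree t) {K : Finset W} (hK : K.Nonempty)
    (hdeg : MinInOutDegreeGE B K (Fintype.card V - 1)) :
    ∃ f : V → W, Function.Injective f ∧ (∀ x, f x ∈ K) ∧ ∀ x y, t x y → B (f x) (f y) := by
  refine Fintype.induction_subsingleton_or_nontrivial (P := fun V _ => ∀ t : V → V → Prop,
    IsOrientedTree t → MinInOutDegreeGE B K (Fintype.card V - 1) →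
    ∃ f : V → W, Function.Injective f ∧ (∀ x, f x ∈ K) ∧ ∀ x y, t x y → B (f x) (f y))
    V ?_ ?_ t ht hdeg
  · intro V _ _ t ht _
    obtain ⟨w, hw⟩ := hK
    refine ⟨fun _ => w, Function.injective_of_subsingleton _, fun _ => hw, fun x y hxy => ?_⟩
    exact absurd (Subsingleton.elim x y ▸ hxy) (ht.1 x y hxy)
  intro V _ _ ih t ht hdeg
  classical
  obtain ⟨v, hv⟩ := ht.2.exists_vert_degree_one_of_nontrivial
  obtain ⟨u, hvu, hleaf⟩ := SimpleGraph.degree_eq_one_iff_existsUnique_adj.1 hv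
  have huv : u ≠ v := hvu.1.symm
  have hcard : Fintype.card ({v}ᶜ : Set V) = Fintype.card V - 1 := by
    rw [Fintype.card_compl_set]; simp
  obtain ⟨f, hf, hfK, hft⟩ := ih _ (by have := Fintype.card_pos (α := V); omega) _
    (ht.restrict_compl_singleton hv) fun a ha => by have := hdeg a ha; omega
  set a := f ⟨u, huv⟩
  have hA : #(univ.image f) = Fintype.card V - 1 := by
    rw [card_image_of_injective _ hf, card_univ, hcard]
  -- `a` is in the image of `f` but is not its own neighbour, so the image cannot cover all of them
  have hfresh : ∀ N : Finset W, N ⊆ K.erase a → Fintype.card V - 1 ≤ #N →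
      ∃ w ∈ N, w ∉ Set.range f := by
    intro N hN hcardN
    obtain ⟨w, hwN, hw⟩ := exists_mem_notMem_of_card_le (mem_image_of_mem f (mem_univ _))
      (fun h => notMem_erase a K (hN h)) (hA.trans_le hcardN)
    exact ⟨w, hwN, by simpa using hw⟩
  rcases hvu.2 with htvu | htuv
  · obtain ⟨w, hw, hwf⟩ := hfresh _ (filter_subset _ _) (hdeg a (hfK _)).2
    obtain ⟨hwK, hwa⟩ := mem_filter.1 hw
    exact exists_extension_at_leaf ht.1 huv hleaf hf hfK hft (mem_of_mem_erase hwK) hwf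
      (fun h => absurd htvu (ht.1 _ _ h)) fun _ => hwa
  · obtain ⟨w, hw, hwf⟩ := hfresh _ (filter_subset _ _) (hdeg a (hfK _)).1
    obtain ⟨hwK, hwa⟩ := mem_filter.1 hw
    exact exists_extension_at_leaf ht.1 huv hleaf hf hfK hft (mem_of_mem_erase hwK) hwf
      (fun _ => hwa) fun h => absurd htuv (ht.1 _ _ h)

end OrientedTree

/-- In a 2-colouring (colour `0` red, colour `1` blue) of the complete
directed graph, if at least `2k + 2l` vertices have red out-degree at most `k`, then
there is a blue copy of every oriented tree on at most `l` vertices. -/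
theorem blue_tree_of_many_small_red_outdegree (N k l : ℕ) (χ : Fin N → Fin N → Fin 2)
    (S : Set (Fin N)) (hS : 2 * k + 2 * l ≤ S.ncard)
    (hdeg : ∀ v ∈ S, {w : Fin N | w ≠ v ∧ χ v w = 0}.ncard ≤ k) :
    ∀ (m : ℕ) (t : Fin m → Fin m → Prop), IsOrientedTree t → m ≤ l →
      ∃ f : Fin m → Fin N, Function.Injective f ∧ ∀ x y, t x y → χ (f x) (f y) = 1 := by
  classical
  intro m t ht hml
  have hm : 0 < m := Fin.pos_iff_nonempty.2 ht.2.nonempty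
  have hred : ∀ v ∈ S.toFinset, #(outNbhd (fun v w => χ v w = 0) S.toFinset v) ≤ k := by
    intro v hv
    rw [← Set.ncard_coe_finset]
    refine (Set.ncard_le_ncard fun w hw => ?_).trans (hdeg v (Set.mem_toFinset.1 hv))
    simp_all [outNbhd]
  obtain ⟨K, hK, hKdeg⟩ := exists_minInOutDegreeGE_not_of_card_outNbhd_le (l := l) (by omega)
    (by rwa [← Set.ncard_eq_toFinset_card']) hred
  obtain ⟨f, hf, -, hft⟩ := ht.exists_embedding (B := fun v w => ¬ χ v w = 0) hK
    fun a ha => by rw [Fintype.card_fin]; have := hKdeg a ha; omega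
  exact ⟨f, hf, fun x y hxy => Fin.eq_one_of_ne_zero _ (hft x y hxy)⟩
end

section
/- For every integer k ≥ 3 and every positive integer n, the k-colour directed Ramsey number of the directed path on n+1 vertices satisfies R(P_{n+1}, k) ≥ 2^{3-k}·n^{k-1}; that is, there is a k-edge-colouring of the complete directed graph on ⌈2^{3-k}n^{k-1}⌉ - 1 vertices with no monochromatic directed path on n+1 vertices. -/
namespace DRPL

def av (n i : ℕ) : ℕ := i * (n - 1) / 2

def hh (n : ℕ) : ℕ := (n + 1) / 2

def vv (n c y1 : ℕ) : ℕ → ℕ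
  | 0 => y1
  | i + 1 => vv n c y1 i + ((av n (i + 1) - vv n c y1 i) + c / hh n ^ i % hh n)

def yf (n c y1 : ℕ) : ℕ → ℕ
  | 0 => y1
  | i + 1 => (av n (i + 1) - vv n c y1 i) + c / hh n ^ i % hh n

lemma vv_succ (n c y1 i : ℕ) :
    vv n c y1 (i + 1) = vv n c y1 i + yf n c y1 (i + 1) := rfl

lemma av_diff (n i : ℕ) :
    av n i + (n - 1) / 2 ≤ av n (i + 1) ∧ av n (i + 1) ≤ av n i + n / 2 := by
  unfold av
  have h : (i + 1) * (n - 1) = i * (n - 1) + (n - 1) := by ring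
  rw [h]
  omega

lemma z_le (n c i : ℕ) (hn : 0 < n) : c / hh n ^ i % hh n ≤ (n + 1) / 2 - 1 := by
  have h1 : 0 < hh n := by unfold hh; omega
  have := Nat.mod_lt (c / hh n ^ i) h1
  unfold hh at *
  omega

lemma vbound (n c y1 : ℕ) (hn : 0 < n) (hy1 : y1 < n) :
    ∀ i, av n i ≤ vv n c y1 i ∧ vv n c y1 i ≤ av n i + (n - 1) := by
  intro i
  induction i with
  | zero =>
    show av n 0 ≤ y1 ∧ y1 ≤ av n 0 + (n - 1)
    unfold av
    omega
  | succ p ih =>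
    have hd := av_diff n p
    have hz := z_le n c p hn
    show av n (p + 1) ≤ vv n c y1 p + ((av n (p + 1) - vv n c y1 p) + c / hh n ^ p % hh n) ∧
      vv n c y1 p + ((av n (p + 1) - vv n c y1 p) + c / hh n ^ p % hh n) ≤ av n (p + 1) + (n - 1)
    omega

lemma ybound (n c y1 : ℕ) (hn : 0 < n) (hy1 : y1 < n) : ∀ i, yf n c y1 i ≤ n - 1 := by
  intro i
  cases i with
  | zero =>
    show y1 ≤ n - 1
    omega
  | succ p =>
    have hv := vbound n c y1 hn hy1 p
    have hd := av_diff n p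
    have hz := z_le n c p hn
    show (av n (p + 1) - vv n c y1 p) + c / hh n ^ p % hh n ≤ n - 1
    omega

lemma vv_eq_sum (n c y1 : ℕ) : ∀ m, vv n c y1 m = ∑ i ∈ Finset.range (m + 1), yf n c y1 i := by
  intro m
  induction m with
  | zero => simp [vv, yf]
  | succ p ih => rw [Finset.sum_range_succ, ← ih, vv_succ]

def Xf (n j c y1 : ℕ) : ℕ → ℕ := fun i =>
  if i = 0 then (av n (j - 1) + (n - 1)) - vv n c y1 (j - 1) else yf n c y1 (i - 1)

lemma Xf_le (n j c y1 : ℕ) (hn : 0 < n) (hy1 : y1 < n) : ∀ i, Xf n j c y1 i ≤ n - 1 := by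
  intro i
  unfold Xf
  split
  · have := (vbound n c y1 hn hy1 (j - 1)).1
    omega
  · exact ybound n c y1 hn hy1 _

lemma Xf_sum (n j c y1 : ℕ) (hn : 0 < n) (hy1 : y1 < n) (hj : 1 ≤ j) :
    ∑ i ∈ Finset.range (j + 1), Xf n j c y1 i = av n (j - 1) + (n - 1) := by
  rw [Finset.sum_range_succ']
  have h1 : ∀ i ∈ Finset.range j, Xf n j c y1 (i + 1) = yf n c y1 i := by
    intro i _
    simp [Xf]
  rw [Finset.sum_congr rfl h1]
  have h2 := vv_eq_sum n c y1 (j - 1)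
  have e : j - 1 + 1 = j := by omega
  rw [e] at h2
  have h3 := (vbound n c y1 hn hy1 (j - 1)).2
  have h4 : Xf n j c y1 0 = (av n (j - 1) + (n - 1)) - vv n c y1 (j - 1) := by simp [Xf]
  rw [h4, ← h2]
  omega

lemma digits_inj (H : ℕ) : ∀ m u w, u < H ^ m → w < H ^ m →
    (∀ i, i < m → u / H ^ i % H = w / H ^ i % H) → u = w := by
  intro m
  induction m with
  | zero =>
    intro u w hu hw _
    simp at hu hw
    omega
  | succ p ih =>
    intro u w hu hw hd
    rcases Nat.eq_zero_or_pos H with h0 | hH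
    · subst h0
      simp at hu
    · have h1 : u % H = w % H := by simpa using hd 0 (by omega)
      have hu' : u / H < H ^ p := Nat.div_lt_of_lt_mul (by rw [← pow_succ']; exact hu)
      have hw' : w / H < H ^ p := Nat.div_lt_of_lt_mul (by rw [← pow_succ']; exact hw)
      have h2 : u / H = w / H := by
        apply ih _ _ hu' hw'
        intro i hi
        have h := hd (i + 1) (by omega)
        rw [Nat.div_div_eq_div_mul, Nat.div_div_eq_div_mul, ← pow_succ']
        exact h
      calc u = H * (u / H) + u % H := (Nat.div_add_mod u H).symm
        _ = H * (w / H) + w % H := by rw [h1, h2]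
        _ = w := Nat.div_add_mod w H

lemma Xf_inj (n j c c' y1 y1' : ℕ) (hn : 0 < n) (hy1 : y1 < n) (hy1' : y1' < n)
    (hc : c < hh n ^ (j - 1)) (hc' : c' < hh n ^ (j - 1)) (hj : 1 ≤ j)
    (hX : ∀ i, i < j + 1 → Xf n j c y1 i = Xf n j c' y1' i) :
    y1 = y1' ∧ c = c' := by
  have hyf : ∀ i, i < j → yf n c y1 i = yf n c' y1' i := by
    intro i hi
    have h := hX (i + 1) (by omega)
    simpa [Xf] using h
  have hy : y1 = y1' := by
    have := hyf 0 (by omega)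
    simpa [yf] using this
  have hvv : ∀ i, i < j → vv n c y1 i = vv n c' y1' i := by
    intro i
    induction i with
    | zero => intro _; exact hy
    | succ p ih =>
      intro hp
      rw [vv_succ, vv_succ, ih (by omega), hyf (p + 1) hp]
  refine ⟨hy, digits_inj (hh n) (j - 1) c c' hc hc' ?_⟩
  intro i hi
  have h1 := hyf (i + 1) (by omega)
  have h2 := hvv i (by omega)
  have e1 : yf n c y1 (i + 1) = (av n (i + 1) - vv n c y1 i) + c / hh n ^ i % hh n := rfl
  have e2 : yf n c' y1' (i + 1) = (av n (i + 1) - vv n c' y1' i) + c' / hh n ^ i % hh n := rfl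
  rw [e1, e2, h2] at h1
  omega

def DD (n j N : ℕ) (a : Fin N) : ℕ → ℕ := Xf n j (a.val / n / n) (a.val / n % n)

open Classical in
noncomputable def chi (k n N : ℕ) (hk : 3 ≤ k) (a b : Fin N) : Fin k :=
  if hab : ∃ i, i < k - 1 ∧ DD n (k - 2) N a i < DD n (k - 2) N b i then
    ⟨Nat.find hab, by have := (Nat.find_spec hab).1; omega⟩
  else ⟨k - 1, by omega⟩

lemma chi_cases {k n N : ℕ} (hk : 3 ≤ k) (a b : Fin N) :
    ((chi k n N hk a b).val < k - 1 ∧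
      DD n (k - 2) N a (chi k n N hk a b).val < DD n (k - 2) N b (chi k n N hk a b).val) ∨
    ((chi k n N hk a b).val = k - 1 ∧
      ∀ i, i < k - 1 → ¬ DD n (k - 2) N a i < DD n (k - 2) N b i) := by
  unfold chi
  split
  · next hab =>
      left
      exact ⟨(Nat.find_spec hab).1, (Nat.find_spec hab).2⟩
  · next hab =>
      right
      exact ⟨rfl, fun i hi hlt => hab ⟨i, hi, hlt⟩⟩

end DRPL

/-- For `k ≥ 3` and `n ≥ 1`, `R(P_{n+1}, k) ≥ 2^(3-k) * n^(k-1)`: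
for every `N < 2^(3-k) * n^(k-1)` there is a `k`-edge-colouring of the complete
directed graph on `N` vertices with no monochromatic directed path on `n + 1`
vertices. -/
theorem directed_ramsey_path_lower_bound (k n : ℕ) (hk : 3 ≤ k) (hn : 0 < n) :
    ∀ N : ℕ, (N : ℝ) < 2 ^ ((3 : ℤ) - (k : ℤ)) * (n : ℝ) ^ (k - 1) →
      ∃ χ : Fin N → Fin N → Fin k,
        ¬ ∃ (c : Fin k) (f : Fin (n + 1) → Fin N), Function.Injective f ∧
            ∀ x y : Fin (n + 1), (y : ℕ) = (x : ℕ) + 1 → χ (f x) (f y) = c := by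
  intro N hN
  have hhpos : 0 < DRPL.hh n := by unfold DRPL.hh; omega
  have h2h : (n : ℝ) ≤ 2 * (DRPL.hh n : ℝ) := by
    have : n ≤ 2 * DRPL.hh n := by unfold DRPL.hh; omega
    exact_mod_cast this
  -- numeric reduction to a Nat bound
  have hNlt : N < n ^ 2 * DRPL.hh n ^ (k - 3) := by
    have key : (2 : ℝ) ^ ((3 : ℤ) - (k : ℤ)) * (n : ℝ) ^ (k - 1) ≤
        (n : ℝ) ^ 2 * (DRPL.hh n : ℝ) ^ (k - 3) := by
      have e1 : ((3 : ℤ) - (k : ℤ)) = -((k - 3 : ℕ) : ℤ) := by omega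
      rw [e1, zpow_neg, zpow_natCast]
      rw [inv_mul_le_iff₀ (by positivity : (0 : ℝ) < 2 ^ (k - 3))]
      calc (n : ℝ) ^ (k - 1) = (n : ℝ) ^ 2 * (n : ℝ) ^ (k - 3) := by
            rw [← pow_add]; congr 1; omega
        _ ≤ (n : ℝ) ^ 2 * (2 * (DRPL.hh n : ℝ)) ^ (k - 3) := by
            have e3 : (n : ℝ) ^ (k - 3) ≤ (2 * (DRPL.hh n : ℝ)) ^ (k - 3) :=
              pow_le_pow_left₀ (by positivity) h2h _
            exact mul_le_mul_of_nonneg_left e3 (by positivity)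
        _ = 2 ^ (k - 3) * ((n : ℝ) ^ 2 * (DRPL.hh n : ℝ) ^ (k - 3)) := by
            rw [mul_pow]; ring
    have hNR : (N : ℝ) < ((n ^ 2 * DRPL.hh n ^ (k - 3) : ℕ) : ℝ) := by
      push_cast
      exact lt_of_lt_of_le hN key
    exact_mod_cast hNR
  refine ⟨DRPL.chi k n N hk, ?_⟩
  rintro ⟨c, f, finj, hpath⟩
  have hy1 : ∀ a : Fin N, a.val / n % n < n := fun a => Nat.mod_lt _ hn
  have hca : ∀ a : Fin N, a.val / n / n < DRPL.hh n ^ (k - 2 - 1) := by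
    intro a
    have e : n ^ 2 * DRPL.hh n ^ (k - 3) = n * n * DRPL.hh n ^ (k - 2 - 1) := by
      have e2 : k - 3 = k - 2 - 1 := by omega
      rw [e2]; ring
    have h1 : a.val < n * n * DRPL.hh n ^ (k - 2 - 1) := by
      have h2 := a.isLt
      omega
    rw [Nat.div_div_eq_div_mul]
    exact Nat.div_lt_of_lt_mul h1
  have hDle : ∀ (a : Fin N) i, DRPL.DD n (k - 2) N a i ≤ n - 1 := by
    intro a i
    exact DRPL.Xf_le n (k - 2) _ _ hn (hy1 a) i
  rcases Nat.lt_or_ge c.val (k - 1) with hc | hc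
  · -- colour with a strictly increasing coordinate
    have step : ∀ x y : Fin (n + 1), (y : ℕ) = (x : ℕ) + 1 →
        DRPL.DD n (k - 2) N (f x) c.val < DRPL.DD n (k - 2) N (f y) c.val := by
      intro x y hxy
      have h := hpath x y hxy
      rcases DRPL.chi_cases hk (f x) (f y) with ⟨h1, h2⟩ | ⟨h1, _⟩
      · rw [h] at h1 h2
        exact h2
      · rw [h] at h1
        omega
    have chain : ∀ m : ℕ, ∀ h : m < n + 1,
        DRPL.DD n (k - 2) N (f ⟨0, n.succ_pos⟩) c.val + m ≤
          DRPL.DD n (k - 2) N (f ⟨m, h⟩) c.val := by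
      intro m
      induction m with
      | zero =>
        intro h
        have e : (⟨0, h⟩ : Fin (n + 1)) = ⟨0, n.succ_pos⟩ := rfl
        rw [e]
        omega
      | succ p ih =>
        intro h
        have hplt : p < n + 1 := by omega
        have h1 := ih hplt
        have h2 := step ⟨p, hplt⟩ ⟨p + 1, h⟩ rfl
        omega
    have hltn : n < n + 1 := Nat.lt_succ_self n
    have h3 := chain n hltn
    have h4 := hDle (f ⟨n, hltn⟩) c.val
    omega
  · -- the "clique" colour
    have hc' : c.val = k - 1 := by have := c.isLt; omega
    have step2 : ∀ x y : Fin (n + 1), (y : ℕ) = (x : ℕ) + 1 →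
        ∀ i, i ∈ Finset.range (k - 2 + 1) →
          DRPL.DD n (k - 2) N (f y) i = DRPL.DD n (k - 2) N (f x) i := by
      intro x y hxy
      have h := hpath x y hxy
      rcases DRPL.chi_cases hk (f x) (f y) with ⟨h1, _⟩ | ⟨_, h2⟩
      · rw [h] at h1
        omega
      · have hle : ∀ i ∈ Finset.range (k - 2 + 1),
            DRPL.DD n (k - 2) N (f y) i ≤ DRPL.DD n (k - 2) N (f x) i := by
          intro i hi
          have hi' : i < k - 1 := by have := Finset.mem_range.mp hi; omega
          have := h2 i hi'
          omega
        have hs1 : ∑ i ∈ Finset.range (k - 2 + 1), DRPL.DD n (k - 2) N (f x) i =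
            DRPL.av n (k - 2 - 1) + (n - 1) :=
          DRPL.Xf_sum n (k - 2) _ _ hn (hy1 (f x)) (by omega)
        have hs2 : ∑ i ∈ Finset.range (k - 2 + 1), DRPL.DD n (k - 2) N (f y) i =
            DRPL.av n (k - 2 - 1) + (n - 1) :=
          DRPL.Xf_sum n (k - 2) _ _ hn (hy1 (f y)) (by omega)
        exact (Finset.sum_eq_sum_iff_of_le hle).mp (hs2.trans hs1.symm)
    have alleq : ∀ m : ℕ, ∀ h : m < n + 1, ∀ i, i ∈ Finset.range (k - 2 + 1) →
        DRPL.DD n (k - 2) N (f ⟨m, h⟩) i = DRPL.DD n (k - 2) N (f ⟨0, n.succ_pos⟩) i := by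
      intro m
      induction m with
      | zero =>
        intro h i _
        rfl
      | succ p ih =>
        intro h i hi
        have hplt : p < n + 1 := by omega
        rw [step2 ⟨p, hplt⟩ ⟨p + 1, h⟩ rfl i hi, ih hplt i hi]
    have ginj : Function.Injective
        (fun m : Fin (n + 1) => (⟨(f m).val % n, Nat.mod_lt _ hn⟩ : Fin n)) := by
      intro x y hxy
      have hmod : (f x).val % n = (f y).val % n := congrArg Fin.val hxy
      have hD : ∀ i, i < k - 2 + 1 →
          DRPL.DD n (k - 2) N (f x) i = DRPL.DD n (k - 2) N (f y) i := by
        intro i hi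
        have e1 := alleq x.val x.isLt i (Finset.mem_range.mpr hi)
        have e2 := alleq y.val y.isLt i (Finset.mem_range.mpr hi)
        exact e1.trans e2.symm
      have hinj2 := DRPL.Xf_inj n (k - 2) ((f x).val / n / n) ((f y).val / n / n)
          ((f x).val / n % n) ((f y).val / n % n) hn (hy1 (f x)) (hy1 (f y))
          (hca (f x)) (hca (f y)) (by omega) hD
      obtain ⟨hyeq, hceq⟩ := hinj2
      apply finj
      apply Fin.ext
      have e5 := Nat.div_add_mod ((f x).val / n) n
      have e6 := Nat.div_add_mod ((f y).val / n) n
      have e7 : (f x).val / n = (f y).val / n := by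
        rw [← e5, ← e6, hceq, hyeq]
      calc (f x).val = n * ((f x).val / n) + (f x).val % n := (Nat.div_add_mod _ n).symm
        _ = n * ((f y).val / n) + (f y).val % n := by rw [e7, hmod]
        _ = (f y).val := Nat.div_add_mod _ n
    have hcard := Fintype.card_le_of_injective _ ginj
    simp only [Fintype.card_fin] at hcard
    omega
end
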